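/- arXiv:2103.03314 — 2 statements merged into one kernel-verified Lean document; each statement's English description precedes it below -/
import Mathlib

section
/- Let I be a finite set partitioned into nonempty key-equal groups G1,...,Gm, and let W1,...,Wn be witnesses (subsets of I) sorted so that their values satisfy v(W1) ≤ v(W2) ≤ ... ≤ v(Wn). For each j, let φ_j be the CNF formula consisting of the clauses (∨_{f∈G_i} x_f) for all groups G_i, together with the clauses (∨_{f∈W_t} ¬x_f) for all t ≤ j. Assume that every repair of I contains at least one witness (so min over witnesses contained in a repair is always defined). Then φ_n is unsatisfiable, and if j* is the least index such that φ_{j*} is unsatisfiable, then v(W_{j*}) equals the least upper bound over all repairs J of min{ v(W_t) : W_t ⊆ J }. -/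
/-!
A satisfying assignment of `φ_j` is the same thing as a repair containing none of the
witnesses `W_1, …, W_j`. Hence if `j*` is the first index with `φ_{j*}` unsatisfiable, every
repair contains a witness of index `≤ j*`, so its minimum is at most `v(W_{j*})`, while the repair
read off a model of `φ_{j*-1}` (any repair when `j* = 1`) contains only witnesses of index `≥ j*` and so
attains `v(W_{j*})`: the least upper bound is even a maximum.
-/

open Finset

section

variable {F γ ι : Type*}

def IsRepair (g : F → γ) (J : Finset F) : Prop :=
  ∀ c : γ, ∃ f ∈ J, g f = c

theorem isRepair_univ [Fintype F] {g : F → γ} (hg : ∀ c : γ, ∃ f, g f = c) :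
    IsRepair g univ :=
  fun c => (hg c).imp fun _ hf => ⟨mem_univ _, hf⟩

theorem exists_assignment_iff_exists_repair [Fintype F] (g : F → γ) (w : ι → Finset F)
    (p : ι → Prop) :
    (∃ s : F → Bool, (∀ c : γ, ∃ f, g f = c ∧ s f = true) ∧
        ∀ t, p t → ∃ f ∈ w t, s f = false) ↔
      ∃ J : Finset F, IsRepair g J ∧ ∀ t, p t → ¬ w t ⊆ J := by
  classical
  constructor
  · rintro ⟨s, hgroups, hwit⟩
    refine ⟨univ.filter (s · = true), fun c => ?_, fun t ht hsub => ?_⟩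
    · obtain ⟨f, hf, hs⟩ := hgroups c
      exact ⟨f, by simpa using hs, hf⟩
    · obtain ⟨f, hfw, hs⟩ := hwit t ht
      simpa [hs] using hsub hfw
  · rintro ⟨J, hJ, havoid⟩
    refine ⟨fun f => decide (f ∈ J), fun c => ?_, fun t ht => ?_⟩
    · obtain ⟨f, hf, hg⟩ := hJ c
      exact ⟨f, hg, by simpa using hf⟩
    · obtain ⟨f, hfw, hfJ⟩ := not_subset.mp (havoid t ht)
      exact ⟨f, hfw, by simpa using hfJ⟩

noncomputable def minWitnessValue (w : ι → Finset F) (v : ι → ℝ) (J : Finset F) : ℝ :=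
  sInf {y : ℝ | ∃ t, w t ⊆ J ∧ v t = y}

section minWitnessValue

variable {w : ι → Finset F} {v : ι → ℝ} {J : Finset F}

theorem minWitnessValue_le [Finite ι] {t : ι} (ht : w t ⊆ J) : minWitnessValue w v J ≤ v t :=
  csInf_le ((Set.finite_range v).bddBelow.mono (by rintro _ ⟨t, -, rfl⟩; exact ⟨t, rfl⟩))
    ⟨t, ht, rfl⟩

theorem le_minWitnessValue {a : ℝ} (hne : ∃ t, w t ⊆ J) (h : ∀ t, w t ⊆ J → a ≤ v t) :
    a ≤ minWitnessValue w v J := by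
  obtain ⟨t, ht⟩ := hne
  exact le_csInf ⟨v t, t, ht, rfl⟩ (by rintro _ ⟨t, ht, rfl⟩; exact h t ht)

theorem isGreatest_minWitnessValue [Finite ι] [LinearOrder ι] (hv : Monotone v)
    {R : Finset F → Prop} {j : ι} {J₀ : Finset F}
    (hle : ∀ J, R J → ∃ t ≤ j, w t ⊆ J) (hJ₀ : R J₀) (hJ₀avoid : ∀ t < j, ¬ w t ⊆ J₀) :
    IsGreatest {x : ℝ | ∃ J, R J ∧ x = minWitnessValue w v J} (v j) := by
  have hbound : ∀ J, R J → minWitnessValue w v J ≤ v j := fun J hJ => by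
    obtain ⟨t, htj, ht⟩ := hle J hJ
    exact (minWitnessValue_le ht).trans (hv htj)
  refine ⟨⟨J₀, hJ₀, le_antisymm ?_ (hbound J₀ hJ₀)⟩, ?_⟩
  · obtain ⟨t, -, ht⟩ := hle J₀ hJ₀
    exact le_minWitnessValue ⟨t, ht⟩ fun t ht => hv (not_lt.1 fun htj => hJ₀avoid t htj ht)
  · rintro _ ⟨J, hJ, rfl⟩
    exact hbound J hJ

end minWitnessValue

end

theorem stmt11_general {F γ : Type*} [Fintype F]
    (g : F → γ) (hg : ∀ j : γ, ∃ f, g f = j)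
    (n : ℕ) (w : Fin n → Finset F) (v : Fin n → ℝ)
    (hsorted : ∀ i j : Fin n, i ≤ j → v i ≤ v j)
    (hwit : ∀ J : Finset F, (∀ c : γ, ∃ f ∈ J, g f = c) → ∃ t : Fin n, w t ⊆ J) :
    (¬ ∃ s : F → Bool,
        (∀ c : γ, ∃ f, g f = c ∧ s f = true) ∧
        (∀ t : Fin n, ∃ f ∈ w t, s f = false)) ∧
    (∀ jstar : Fin n,
      (¬ ∃ s : F → Bool,
          (∀ c : γ, ∃ f, g f = c ∧ s f = true) ∧
          (∀ t : Fin n, t ≤ jstar → ∃ f ∈ w t, s f = false)) →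
      (∀ i : Fin n, i < jstar →
        ∃ s : F → Bool,
          (∀ c : γ, ∃ f, g f = c ∧ s f = true) ∧
          (∀ t : Fin n, t ≤ i → ∃ f ∈ w t, s f = false)) →
      IsLUB {x : ℝ | ∃ J : Finset F, (∀ c : γ, ∃ f ∈ J, g f = c) ∧
          x = sInf {y : ℝ | ∃ t : Fin n, w t ⊆ J ∧ v t = y}} (v jstar)) := by
  refine ⟨fun ⟨s, hgroups, hall⟩ => ?_, fun jstar hunsat hsat => ?_⟩
  · obtain ⟨J, hJ, havoid⟩ := (exists_assignment_iff_exists_repair g w fun _ => True).1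
      ⟨s, hgroups, fun t _ => hall t⟩
    obtain ⟨t, ht⟩ := hwit J hJ
    exact havoid t trivial ht
  have hle : ∀ J, IsRepair g J → ∃ t ≤ jstar, w t ⊆ J := fun J hJ => by
    by_contra! havoid
    exact hunsat ((exists_assignment_iff_exists_repair g w (· ≤ jstar)).2 ⟨J, hJ, havoid⟩)
  obtain ⟨J₀, hJ₀, hJ₀avoid⟩ : ∃ J, IsRepair g J ∧ ∀ t < jstar, ¬ w t ⊆ J := by
    by_cases hmin : IsMin jstar
    · exact ⟨univ, isRepair_univ hg, fun t ht => absurd ht hmin.not_lt⟩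
    obtain ⟨J, hJ, havoid⟩ := (exists_assignment_iff_exists_repair g w _).1
      (hsat (Order.pred jstar) (Order.pred_lt_of_not_isMin hmin))
    exact ⟨J, hJ, fun t ht => havoid t ((Order.le_pred_iff_of_not_isMin hmin).2 ht)⟩
  exact (isGreatest_minWitnessValue (fun i j h => hsorted i j h) hle hJ₀ hJ₀avoid).isLUB

/-- Iterative-SAT correctness for the lub-answer of MIN.  Groups are the fibers of `g`
(all nonempty); here a 'repair' is a subset containing at least one element of each
group.  The formula `φ_j` consists of the group clauses `(∨_{f ∈ G_i} x_f)` together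
with the witness clauses `(∨_{f ∈ W_t} ¬x_f)` for all `t ≤ j`; witnesses are sorted so
that their values are ascending.  Assuming every repair contains at least one witness:
`φ_n` (with clauses for all witnesses) is unsatisfiable, and if `j*` is the least index
with `φ_{j*}` unsatisfiable, then `v(W_{j*})` is the least upper bound, over all repairs
`J`, of `min { v(W_t) : W_t ⊆ J }`. -/
theorem stmt11 {F γ : Type*} [Fintype F] [DecidableEq F]
    (g : F → γ) (hg : ∀ j : γ, ∃ f, g f = j)
    (n : ℕ) (w : Fin n → Finset F) (v : Fin n → ℝ)
    (hsorted : ∀ i j : Fin n, i ≤ j → v i ≤ v j)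
    (hwit : ∀ J : Finset F, (∀ c : γ, ∃ f ∈ J, g f = c) → ∃ t : Fin n, w t ⊆ J) :
    (¬ ∃ s : F → Bool,
        (∀ c : γ, ∃ f, g f = c ∧ s f = true) ∧
        (∀ t : Fin n, ∃ f ∈ w t, s f = false)) ∧
    (∀ jstar : Fin n,
      (¬ ∃ s : F → Bool,
          (∀ c : γ, ∃ f, g f = c ∧ s f = true) ∧
          (∀ t : Fin n, t ≤ jstar → ∃ f ∈ w t, s f = false)) →
      (∀ i : Fin n, i < jstar →
        ∃ s : F → Bool,
          (∀ c : γ, ∃ f, g f = c ∧ s f = true) ∧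
          (∀ t : Fin n, t ≤ i → ∃ f ∈ w t, s f = false)) →
      IsLUB {x : ℝ | ∃ J : Finset F, (∀ c : γ, ∃ f ∈ J, g f = c) ∧
          x = sInf {y : ℝ | ∃ t : Fin n, w t ⊆ J ∧ v t = y}} (v jstar)) :=
  stmt11_general g hg n w v hsorted hwit
end

section
/- DISTINCT encoding correctness: Let I be partitioned into groups G1,...,Gm and let A be a finite set of answer values; for each b ∈ A let W^b be a family of witnesses (subsets of I). Consider the encoding that introduces variables z^b_j with hard clauses forcing z^b_j ↔ (∨_{f ∈ W^b_j} ¬x_f) and v^b with hard clauses forcing v^b ↔ (∧_j z^b_j). Then for any assignment s satisfying the group hard clauses and these definitional hard clauses, with repair J_s: v^b is false under s if and only if some witness in W^b is contained in J_s. Consequently, the number of b ∈ A with v^b false equals the number of distinct answers b realized in J_s, and minimizing/maximizing the number of satisfied clauses (v^b) over such assignments computes the lub/glb of COUNT(DISTINCT) over all repairs. -/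
open Finset

/-- `J` contains exactly one fact from each key-equal group (fibers of `g`). -/
def IsTransversal {F γ : Type*} (g : F → γ) (J : Finset F) : Prop :=
  ∀ j : γ, ∃! f, f ∈ J ∧ g f = j

/-- `s` satisfies the hard group clauses: exactly one variable true per group. -/
def SatHard {F γ : Type*} (g : F → γ) (s : F → Bool) : Prop :=
  (∀ j : γ, ∃ f, g f = j ∧ s f = true) ∧
  (∀ u v : F, u ≠ v → g u = g v → ¬(s u = true ∧ s v = true))

/-- The repair corresponding to an assignment `s`. -/
def repOf {F : Type*} [Fintype F] [DecidableEq F] (s : F → Bool) : Finset F :=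
  Finset.univ.filter (fun f => s f = true)

/-- The COUNT(DISTINCT) answer on repair `J`: the number of answers `b` realized in `J`,
i.e. such that some witness in `W^b` is contained in `J`. -/
def countDistinct {F A : Type*} [Fintype A] [DecidableEq F]
    (Wfam : A → Finset (Finset F)) (J : Finset F) : ℕ :=
  (Finset.univ.filter (fun b : A => ∃ Wj ∈ Wfam b, Wj ⊆ J)).card

/-!
Under the definitional clauses, `v^b` is false exactly when some witness of `W^b` lies in the
repair, so the number of satisfied soft clauses `(v^b)` is `|A|` minus COUNT(DISTINCT) of the
repair. Assignments satisfying the group clauses are exactly the indicator functions of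
repairs, and `z`, `v` are determined by `x`; hence minimizing the satisfied `(v^b)` maximizes
COUNT(DISTINCT) over repairs, and vice versa.
-/

theorem exists_definitional_extension {F A : Type*} [DecidableEq F]
    (Wfam : A → Finset (Finset F)) (s : F → Bool) :
    ∃ (z : A → Finset F → Bool) (vb : A → Bool),
      (∀ b : A, ∀ Wj ∈ Wfam b, (z b Wj = true ↔ ∃ f ∈ Wj, s f = false)) ∧
      (∀ b : A, (vb b = true ↔ ∀ Wj ∈ Wfam b, z b Wj = true)) :=
  ⟨fun _ Wj => decide (∃ f ∈ Wj, s f = false),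
    fun b => decide (∀ Wj ∈ Wfam b, decide (∃ f ∈ Wj, s f = false) = true),
    fun _ _ _ => decide_eq_true_iff, fun _ => decide_eq_true_iff⟩

section Encoding

variable {F A : Type*} [Fintype F] [DecidableEq F]
  {Wfam : A → Finset (Finset F)} {s : F → Bool} {z : A → Finset F → Bool} {vb : A → Bool}

theorem vb_eq_false_iff
    (hz : ∀ b : A, ∀ Wj ∈ Wfam b, (z b Wj = true ↔ ∃ f ∈ Wj, s f = false))
    (hv : ∀ b : A, (vb b = true ↔ ∀ Wj ∈ Wfam b, z b Wj = true)) (b : A) :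
    vb b = false ↔ ∃ Wj ∈ Wfam b, Wj ⊆ repOf s := by
  have hsub : ∀ Wj ∈ Wfam b, (z b Wj = false ↔ Wj ⊆ repOf s) := by
    intro Wj hWj
    rw [← Bool.not_eq_true, hz b Wj hWj, not_exists]
    simp [subset_iff, repOf]
  rw [← Bool.not_eq_true, hv b, not_forall₂]
  simp only [exists_prop]
  exact exists_congr fun Wj => and_congr_right fun hWj => by rw [Bool.not_eq_true, hsub Wj hWj]

theorem card_filter_vb_eq_false [Fintype A]
    (hz : ∀ b : A, ∀ Wj ∈ Wfam b, (z b Wj = true ↔ ∃ f ∈ Wj, s f = false))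
    (hv : ∀ b : A, (vb b = true ↔ ∀ Wj ∈ Wfam b, z b Wj = true)) :
    (univ.filter (fun b : A => vb b = false)).card = countDistinct Wfam (repOf s) := by
  unfold countDistinct
  congr 1
  exact filter_congr fun b _ => vb_eq_false_iff hz hv b

theorem card_filter_vb_eq_true_add_countDistinct [Fintype A]
    (hz : ∀ b : A, ∀ Wj ∈ Wfam b, (z b Wj = true ↔ ∃ f ∈ Wj, s f = false))
    (hv : ∀ b : A, (vb b = true ↔ ∀ Wj ∈ Wfam b, z b Wj = true)) :
    (univ.filter (fun b : A => vb b = true)).card + countDistinct Wfam (repOf s)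
      = Fintype.card A := by
  rw [← card_filter_vb_eq_false hz hv, ← card_univ,
    ← card_filter_add_card_filter_not (s := univ) (fun b : A => vb b = true)]
  simp only [Bool.not_eq_true]

end Encoding

section Repairs

variable {F γ : Type*} [DecidableEq F] {g : F → γ}

theorem isTransversal_repOf [Fintype F] {s : F → Bool} (hs : SatHard g s) :
    IsTransversal g (repOf s) := by
  intro j
  obtain ⟨f, hgf, hsf⟩ := hs.1 j
  refine ⟨f, ⟨by simp [repOf, hsf], hgf⟩, ?_⟩
  rintro f' ⟨hf', hgf'⟩
  by_contra hne
  exact hs.2 f' f hne (hgf'.trans hgf.symm) ⟨by simpa [repOf] using hf', hsf⟩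

theorem satHard_of_isTransversal {J : Finset F} (hJ : IsTransversal g J) :
    SatHard g (fun f => decide (f ∈ J)) := by
  refine ⟨fun j => ?_, fun u v huv hguv ⟨hu, hv⟩ => ?_⟩
  · obtain ⟨f, ⟨hfJ, hgf⟩, -⟩ := hJ j
    exact ⟨f, hgf, decide_eq_true hfJ⟩
  · obtain ⟨f, -, huniq⟩ := hJ (g u)
    exact huv ((huniq u ⟨of_decide_eq_true hu, rfl⟩).trans
      (huniq v ⟨of_decide_eq_true hv, hguv.symm⟩).symm)

theorem repOf_decide_mem [Fintype F] (J : Finset F) : repOf (fun f => decide (f ∈ J)) = J := by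
  ext f
  simp [repOf]

end Repairs

section Optimization

variable {F γ A : Type*} [Fintype F] [DecidableEq F] [Fintype A]
  {g : F → γ} {Wfam : A → Finset (Finset F)} {s : F → Bool} {z : A → Finset F → Bool}
  {vb : A → Bool}

theorem exists_encoding_of_isTransversal {J : Finset F}
    (hJ : IsTransversal g J) (Wfam : A → Finset (Finset F)) :
    ∃ (s : F → Bool) (z : A → Finset F → Bool) (vb : A → Bool),
      SatHard g s ∧
      (∀ b : A, ∀ Wj ∈ Wfam b, (z b Wj = true ↔ ∃ f ∈ Wj, s f = false)) ∧
      (∀ b : A, (vb b = true ↔ ∀ Wj ∈ Wfam b, z b Wj = true)) ∧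
      (univ.filter (fun b : A => vb b = true)).card + countDistinct Wfam J
        = Fintype.card A := by
  obtain ⟨z, vb, hz, hv⟩ := exists_definitional_extension Wfam (fun f => decide (f ∈ J))
  refine ⟨_, z, vb, satHard_of_isTransversal hJ, hz, hv, ?_⟩
  simpa only [repOf_decide_mem] using card_filter_vb_eq_true_add_countDistinct hz hv

theorem countDistinct_le_of_card_filter_vb_le
    (hz : ∀ b : A, ∀ Wj ∈ Wfam b, (z b Wj = true ↔ ∃ f ∈ Wj, s f = false))
    (hv : ∀ b : A, (vb b = true ↔ ∀ Wj ∈ Wfam b, z b Wj = true))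
    (hmin : ∀ (s' : F → Bool) (z' : A → Finset F → Bool) (vb' : A → Bool),
      SatHard g s' →
      (∀ b : A, ∀ Wj ∈ Wfam b, (z' b Wj = true ↔ ∃ f ∈ Wj, s' f = false)) →
      (∀ b : A, (vb' b = true ↔ ∀ Wj ∈ Wfam b, z' b Wj = true)) →
      (univ.filter (fun b : A => vb b = true)).card ≤
        (univ.filter (fun b : A => vb' b = true)).card)
    {J : Finset F} (hJ : IsTransversal g J) :
    countDistinct Wfam J ≤ countDistinct Wfam (repOf s) := by
  obtain ⟨s', z', vb', hs', hz', hv', hJcount⟩ :=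
    exists_encoding_of_isTransversal hJ Wfam
  have hle := hmin s' z' vb' hs' hz' hv'
  have hcount := card_filter_vb_eq_true_add_countDistinct hz hv
  omega

theorem countDistinct_ge_of_card_filter_vb_ge
    (hz : ∀ b : A, ∀ Wj ∈ Wfam b, (z b Wj = true ↔ ∃ f ∈ Wj, s f = false))
    (hv : ∀ b : A, (vb b = true ↔ ∀ Wj ∈ Wfam b, z b Wj = true))
    (hmax : ∀ (s' : F → Bool) (z' : A → Finset F → Bool) (vb' : A → Bool),
      SatHard g s' →
      (∀ b : A, ∀ Wj ∈ Wfam b, (z' b Wj = true ↔ ∃ f ∈ Wj, s' f = false)) →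
      (∀ b : A, (vb' b = true ↔ ∀ Wj ∈ Wfam b, z' b Wj = true)) →
      (univ.filter (fun b : A => vb' b = true)).card ≤
        (univ.filter (fun b : A => vb b = true)).card)
    {J : Finset F} (hJ : IsTransversal g J) :
    countDistinct Wfam (repOf s) ≤ countDistinct Wfam J := by
  obtain ⟨s', z', vb', hs', hz', hv', hJcount⟩ :=
    exists_encoding_of_isTransversal hJ Wfam
  have hle := hmax s' z' vb' hs' hz' hv'
  have hcount := card_filter_vb_eq_true_add_countDistinct hz hv
  omega

end Optimization

theorem stmt17_general {F γ A : Type*} [Fintype F] [DecidableEq F] [Fintype A]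
    (g : F → γ)
    (Wfam : A → Finset (Finset F)) :
    ∀ (s : F → Bool) (z : A → Finset F → Bool) (vb : A → Bool),
      SatHard g s →
      (∀ b : A, ∀ Wj ∈ Wfam b, (z b Wj = true ↔ ∃ f ∈ Wj, s f = false)) →
      (∀ b : A, (vb b = true ↔ ∀ Wj ∈ Wfam b, z b Wj = true)) →
      ((∀ b : A, vb b = false ↔ ∃ Wj ∈ Wfam b, Wj ⊆ repOf s) ∧
       (Finset.univ.filter (fun b : A => vb b = false)).card = countDistinct Wfam (repOf s) ∧
       ((∀ (s' : F → Bool) (z' : A → Finset F → Bool) (vb' : A → Bool),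
            SatHard g s' →
            (∀ b : A, ∀ Wj ∈ Wfam b, (z' b Wj = true ↔ ∃ f ∈ Wj, s' f = false)) →
            (∀ b : A, (vb' b = true ↔ ∀ Wj ∈ Wfam b, z' b Wj = true)) →
            (Finset.univ.filter (fun b : A => vb b = true)).card ≤
              (Finset.univ.filter (fun b : A => vb' b = true)).card) →
          IsGreatest {x : ℕ | ∃ J : Finset F, IsTransversal g J ∧ countDistinct Wfam J = x}
            (countDistinct Wfam (repOf s))) ∧
       ((∀ (s' : F → Bool) (z' : A → Finset F → Bool) (vb' : A → Bool),
            SatHard g s' →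
            (∀ b : A, ∀ Wj ∈ Wfam b, (z' b Wj = true ↔ ∃ f ∈ Wj, s' f = false)) →
            (∀ b : A, (vb' b = true ↔ ∀ Wj ∈ Wfam b, z' b Wj = true)) →
            (Finset.univ.filter (fun b : A => vb' b = true)).card ≤
              (Finset.univ.filter (fun b : A => vb b = true)).card) →
          IsLeast {x : ℕ | ∃ J : Finset F, IsTransversal g J ∧ countDistinct Wfam J = x}
            (countDistinct Wfam (repOf s)))) := by
  intro s z vb hs hz hv
  have hrepair : countDistinct Wfam (repOf s) ∈
      {x : ℕ | ∃ J : Finset F, IsTransversal g J ∧ countDistinct Wfam J = x} :=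
    ⟨repOf s, isTransversal_repOf hs, rfl⟩
  refine ⟨vb_eq_false_iff hz hv, card_filter_vb_eq_false hz hv,
    fun hmin => ⟨hrepair, ?_⟩, fun hmax => ⟨hrepair, ?_⟩⟩
  · rintro _ ⟨J, hJ, rfl⟩
    exact countDistinct_le_of_card_filter_vb_le hz hv hmin hJ
  · rintro _ ⟨J, hJ, rfl⟩
    exact countDistinct_ge_of_card_filter_vb_ge hz hv hmax hJ

/-- Correctness of the DISTINCT encoding: for any assignment `(s, z, vb)` satisfying the
group hard clauses and the definitional hard clauses `z^b_j ↔ (∨_{f ∈ W^b_j} ¬x_f)` and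
`v^b ↔ (∧_j z^b_j)`, with `J_s` the corresponding repair: `v^b` is false iff some witness
of `W^b` is contained in `J_s`; hence the number of `b` with `v^b` false equals the number
of distinct answers realized in `J_s`; and minimizing (resp. maximizing) the number of
satisfied clauses `(v^b)` computes the lub (resp. glb) of COUNT(DISTINCT) over repairs. -/
theorem stmt17 {F γ A : Type*} [Fintype F] [DecidableEq F] [Fintype A] [DecidableEq A]
    (g : F → γ) (hg : ∀ j : γ, ∃ f, g f = j)
    (Wfam : A → Finset (Finset F)) (hWne : ∀ b : A, (Wfam b).Nonempty) :
    ∀ (s : F → Bool) (z : A → Finset F → Bool) (vb : A → Bool),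
      SatHard g s →
      (∀ b : A, ∀ Wj ∈ Wfam b, (z b Wj = true ↔ ∃ f ∈ Wj, s f = false)) →
      (∀ b : A, (vb b = true ↔ ∀ Wj ∈ Wfam b, z b Wj = true)) →
      ((∀ b : A, vb b = false ↔ ∃ Wj ∈ Wfam b, Wj ⊆ repOf s) ∧
       (Finset.univ.filter (fun b : A => vb b = false)).card = countDistinct Wfam (repOf s) ∧
       ((∀ (s' : F → Bool) (z' : A → Finset F → Bool) (vb' : A → Bool),
            SatHard g s' →
            (∀ b : A, ∀ Wj ∈ Wfam b, (z' b Wj = true ↔ ∃ f ∈ Wj, s' f = false)) →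
            (∀ b : A, (vb' b = true ↔ ∀ Wj ∈ Wfam b, z' b Wj = true)) →
            (Finset.univ.filter (fun b : A => vb b = true)).card ≤
              (Finset.univ.filter (fun b : A => vb' b = true)).card) →
          IsGreatest {x : ℕ | ∃ J : Finset F, IsTransversal g J ∧ countDistinct Wfam J = x}
            (countDistinct Wfam (repOf s))) ∧
       ((∀ (s' : F → Bool) (z' : A → Finset F → Bool) (vb' : A → Bool),
            SatHard g s' →
            (∀ b : A, ∀ Wj ∈ Wfam b, (z' b Wj = true ↔ ∃ f ∈ Wj, s' f = false)) →
            (∀ b : A, (vb' b = true ↔ ∀ Wj ∈ Wfam b, z' b Wj = true)) →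
            (Finset.univ.filter (fun b : A => vb' b = true)).card ≤
              (Finset.univ.filter (fun b : A => vb b = true)).card) →
          IsLeast {x : ℕ | ∃ J : Finset F, IsTransversal g J ∧ countDistinct Wfam J = x}
            (countDistinct Wfam (repOf s)))) :=
  stmt17_general g Wfam
end
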